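/- arXiv:1509.06435 — 4 statements merged into one kernel-verified Lean document; each statement's English description precedes it below -/
import Mathlib

section
/- Let α ∈ (0,2]. The set of restrictions to (0,∞) of functions in X_α is dense in L²((0,∞)). -/
/-- `ζ = (π/2) min(1, 1/α)`. -/
noncomputable def zeta (α : ℝ) : ℝ := Real.pi / 2 * min 1 (1 / α)

/-- The class `X_α` of test functions: `u` is analytic in the sector `|arg x| < ζ`,
real-valued on `(0, ∞)`, and for every `ε ∈ (0, ζ)` there is `δ > 0` such that
`|u(x)| = O(|x|^{-δ|x|})` as `|x| → ∞` and `|u(x)| = O(1)` as `|x| → 0`, uniformly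
in the sector `|arg x| ≤ ζ - ε`. -/
def MemX (α : ℝ) (u : ℂ → ℂ) : Prop :=
  (∀ x : ℂ, x ≠ 0 → |Complex.arg x| < zeta α → AnalyticAt ℂ u x) ∧
  (∀ t : ℝ, 0 < t → (u t).im = 0) ∧
  (∀ ε : ℝ, 0 < ε → ε < zeta α → ∃ δ > 0, ∃ C > 0, ∃ r > 0, ∃ R > 0,
    (∀ x : ℂ, x ≠ 0 → |Complex.arg x| ≤ zeta α - ε → ‖x‖ ≤ r → ‖u x‖ ≤ C) ∧
    (∀ x : ℂ, x ≠ 0 → |Complex.arg x| ≤ zeta α - ε → R ≤ ‖x‖ →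
      ‖u x‖ ≤ C * ‖x‖ ^ (-δ * ‖x‖)))

/-!
The functions `u_n(z) = exp(-z log z - n z)` lie in `X_α` for every `n`: on `|arg z| ≤ π/2 - ε`
one has `Re z ≥ |z| sin ε`, so `|u_n(z)| ≤ exp(-(sin ε/2) |z| log |z|)` for large `|z|`.
Their restrictions `x^{-x} e^{-nx}` span a dense subspace of `L²(0, ∞)`: if `g` is orthogonal to
all of them, then `h = x^{-x} g` is integrable with `∫ h(x) e^{-nx} dx = 0` for all `n`. The
functional `F ↦ ∫ F(e^{-x}) h(x) dx` is continuous on `C[0, 1]` and vanishes on polynomials,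
hence on all of `C[0, 1]` by Weierstrass; taking `F(t) = ψ(-log t)` for compactly supported
smooth `ψ` on `(0, ∞)` shows that `h`, hence `g`, vanishes almost everywhere.
-/

open MeasureTheory Set Filter Topology Real

section Moments

variable {h : ℝ → ℝ}

lemma integrableOn_comp_projIcc_exp_neg_mul (hh : IntegrableOn h (Ioi 0))
    (F : C(Icc (0 : ℝ) 1, ℝ)) :
    IntegrableOn (fun x => F (projIcc 0 1 zero_le_one (exp (-x))) * h x) (Ioi 0) :=
  hh.bdd_mul (by fun_prop) (.of_forall fun _ => F.norm_coe_le_norm _)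

noncomputable def integralCompExpNegCLM (hh : IntegrableOn h (Ioi 0)) :
    C(Icc (0 : ℝ) 1, ℝ) →L[ℝ] ℝ :=
  LinearMap.mkContinuous
    { toFun := fun F => ∫ x in Ioi 0, F (projIcc 0 1 zero_le_one (exp (-x))) * h x
      map_add' := fun F G => by
        simp only [ContinuousMap.add_apply, add_mul]
        exact integral_add (integrableOn_comp_projIcc_exp_neg_mul hh F)
          (integrableOn_comp_projIcc_exp_neg_mul hh G)
      map_smul' := fun c F => by
        simp only [ContinuousMap.smul_apply, smul_eq_mul, mul_assoc, integral_const_mul,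
          RingHom.id_apply] }
    (∫ x in Ioi 0, ‖h x‖) fun F => by
      rw [mul_comm, ← integral_const_mul]
      refine norm_integral_le_of_norm_le (hh.norm.const_mul _) (.of_forall fun x => ?_)
      rw [norm_mul]
      exact mul_le_mul_of_nonneg_right (F.norm_coe_le_norm _) (norm_nonneg _)

lemma exp_neg_mem_Icc {x : ℝ} (hx : 0 ≤ x) : exp (-x) ∈ Icc (0 : ℝ) 1 :=
  ⟨(exp_pos _).le, exp_le_one_iff.2 (neg_nonpos.2 hx)⟩

lemma integralCompExpNegCLM_polynomial (hh : IntegrableOn h (Ioi 0))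
    (hmom : ∀ n : ℕ, ∫ x in Ioi 0, exp (-x) ^ n * h x = 0) (p : Polynomial ℝ) :
    integralCompExpNegCLM hh (Polynomial.toContinuousMapOnAlgHom (Icc 0 1) p) = 0 := by
  induction p using Polynomial.induction_on' with
  | add p q hp hq => rw [map_add, map_add, hp, hq, add_zero]
  | monomial n c =>
    calc integralCompExpNegCLM hh (Polynomial.toContinuousMapOnAlgHom (Icc 0 1) (.monomial n c))
        = ∫ x in Ioi 0, c * (exp (-x) ^ n * h x) :=
          setIntegral_congr_fun measurableSet_Ioi fun x hx => by
            simp [projIcc_of_mem _ (exp_neg_mem_Icc (le_of_lt hx)), mul_assoc]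
      _ = 0 := by rw [integral_const_mul, hmom, mul_zero]

lemma integralCompExpNegCLM_eq_zero (hh : IntegrableOn h (Ioi 0))
    (hmom : ∀ n : ℕ, ∫ x in Ioi 0, exp (-x) ^ n * h x = 0) : integralCompExpNegCLM hh = 0 := by
  have hdense : Dense (polynomialFunctions (Icc (0 : ℝ) 1) : Set C(Icc (0 : ℝ) 1, ℝ)) := by
    rw [dense_iff_closure_eq, ← Subalgebra.topologicalClosure_coe,
      polynomialFunctions_closure_eq_top, Algebra.coe_top]
  refine DFunLike.coe_injective (Continuous.ext_on hdense (map_continuous _) continuous_zero ?_)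
  rintro _ ⟨p, -, rfl⟩
  exact integralCompExpNegCLM_polynomial hh hmom p

/-- At `t = 0` the function takes the junk value `ψ (-log 0) = ψ 0`. -/
lemma continuous_comp_neg_log {ψ : ℝ → ℝ} (hψ : Continuous ψ) (hcs : HasCompactSupport ψ)
    (h0 : ψ 0 = 0) : Continuous fun t => ψ (-log t) := by
  refine continuous_iff_continuousAt.2 fun t => ?_
  rcases eq_or_ne t 0 with rfl | ht
  · rw [← continuousWithinAt_compl_self, ContinuousWithinAt, log_zero, neg_zero, h0]
    exact (hcs.is_zero_at_infty.mono_left atTop_le_cocompact).comp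
      (tendsto_neg_atBot_atTop.comp tendsto_log_nhdsNE_zero)
  · exact hψ.continuousAt.comp (continuousAt_log ht).neg

lemma setIntegral_mul_eq_zero_of_hasCompactSupport (hh : IntegrableOn h (Ioi 0))
    (hmom : ∀ n : ℕ, ∫ x in Ioi 0, exp (-x) ^ n * h x = 0) {ψ : ℝ → ℝ} (hψ : Continuous ψ)
    (hcs : HasCompactSupport ψ) (h0 : ψ 0 = 0) : ∫ x in Ioi 0, ψ x * h x = 0 := by
  let F : C(Icc (0 : ℝ) 1, ℝ) :=
    ⟨fun t => ψ (-log t), (continuous_comp_neg_log hψ hcs h0).comp continuous_subtype_val⟩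
  calc ∫ x in Ioi 0, ψ x * h x = integralCompExpNegCLM hh F :=
        setIntegral_congr_fun measurableSet_Ioi fun x hx => by
          simp [F, projIcc_of_mem _ (exp_neg_mem_Icc (le_of_lt hx))]
    _ = 0 := DFunLike.congr_fun (integralCompExpNegCLM_eq_zero hh hmom) F

theorem ae_eq_zero_of_integral_exp_neg_pow_mul_eq_zero (hh : IntegrableOn h (Ioi 0))
    (hmom : ∀ n : ℕ, ∫ x in Ioi 0, exp (-x) ^ n * h x = 0) : h =ᵐ[volume.restrict (Ioi 0)] 0 := by
  have hzero := isOpen_Ioi.ae_eq_zero_of_integral_contDiff_smul_eq_zero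
    (hh.locallyIntegrable.locallyIntegrableOn _) fun ψ hψ hcs hsupp =>
      setIntegral_mul_eq_zero_of_hasCompactSupport hh hmom hψ.continuous hcs
        (image_eq_zero_of_notMem_tsupport fun h => lt_irrefl 0 (hsupp h))
  filter_upwards [hzero, ae_restrict_mem measurableSet_Ioi] with x hx hx0 using hx hx0

end Moments

lemma zeta_le_pi_div_two (α : ℝ) : zeta α ≤ π / 2 :=
  mul_le_of_le_one_right (by positivity) (min_le_left _ _)

noncomputable def cexpNegMulLog (n : ℕ) (z : ℂ) : ℂ :=
  Complex.exp (-(z * Complex.log z) - n * z)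

noncomputable def expNegMulLog (n : ℕ) (x : ℝ) : ℝ :=
  exp (negMulLog x - n * x)

lemma cexpNegMulLog_ofReal (n : ℕ) {x : ℝ} (hx : 0 ≤ x) :
    cexpNegMulLog n x = expNegMulLog n x := by
  simp [cexpNegMulLog, expNegMulLog, negMulLog, ← Complex.ofReal_log hx]

lemma analyticAt_cexpNegMulLog (n : ℕ) {z : ℂ} (hz : z ∈ Complex.slitPlane) :
    AnalyticAt ℂ (cexpNegMulLog n) z :=
  analyticAt_cexp.comp (((analyticAt_id.mul (analyticAt_clog hz)).neg).sub
    (analyticAt_const.mul analyticAt_id))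

lemma norm_cexpNegMulLog (n : ℕ) (z : ℂ) :
    ‖cexpNegMulLog n z‖ = exp (-(z.re * log ‖z‖) + z.im * z.arg - n * z.re) := by
  simp only [cexpNegMulLog, Complex.norm_exp, Complex.sub_re, Complex.neg_re, Complex.mul_re,
    Complex.log_re, Complex.log_im, Complex.natCast_re, Complex.natCast_im]
  ring_nf

lemma im_mul_arg_le {z : ℂ} (h : |z.arg| ≤ π / 2) : z.im * z.arg ≤ ‖z‖ * (π / 2) :=
  calc z.im * z.arg ≤ |z.im| * |z.arg| := by rw [← abs_mul]; exact le_abs_self _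
    _ ≤ ‖z‖ * (π / 2) := mul_le_mul (Complex.abs_im_le_norm z) h (abs_nonneg _) (norm_nonneg _)

lemma sin_mul_norm_le_re {z : ℂ} {ε : ℝ} (hε : 0 ≤ ε) (h : |z.arg| ≤ π / 2 - ε) :
    sin ε * ‖z‖ ≤ z.re := by
  have hcos : sin ε ≤ cos z.arg := by
    rw [← cos_abs, ← cos_pi_div_two_sub]
    exact cos_le_cos_of_nonneg_of_le_pi (abs_nonneg _) (by linarith [pi_pos]) h
  rw [← Complex.norm_mul_cos_arg, mul_comm]
  exact mul_le_mul_of_nonneg_left hcos (norm_nonneg z)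

lemma norm_cexpNegMulLog_le_of_norm_le_one (n : ℕ) {z : ℂ} (harg : |z.arg| ≤ π / 2)
    (hz : ‖z‖ ≤ 1) : ‖cexpNegMulLog n z‖ ≤ exp (1 + π / 2) := by
  have hre : 0 ≤ z.re := Complex.abs_arg_le_pi_div_two_iff.1 harg
  have hlog : log ‖z‖ ≤ 0 := log_nonpos (norm_nonneg z) hz
  have hmul_log : -(z.re * log ‖z‖) ≤ 1 := by
    nlinarith [Complex.re_le_norm z, self_sub_one_le_mul_log (norm_nonneg z)]
  rw [norm_cexpNegMulLog]
  gcongr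
  nlinarith [im_mul_arg_le harg, (n.cast_nonneg : (0 : ℝ) ≤ n), pi_pos]

lemma norm_cexpNegMulLog_le_rpow (n : ℕ) {z : ℂ} {ε : ℝ} (hε : 0 < ε)
    (harg : |z.arg| ≤ π / 2 - ε) (hz : exp (π / sin ε) ≤ ‖z‖) :
    ‖cexpNegMulLog n z‖ ≤ ‖z‖ ^ (-(sin ε / 2) * ‖z‖) := by
  have hsin : 0 < sin ε := sin_pos_of_pos_of_lt_pi hε (by linarith [abs_nonneg z.arg, pi_pos])
  have hz0 : 0 < ‖z‖ := (exp_pos _).trans_le hz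
  have hlog : π / sin ε ≤ log ‖z‖ := by rwa [le_log_iff_exp_le hz0]
  have harg' : |z.arg| ≤ π / 2 := harg.trans (by linarith)
  have hre := sin_mul_norm_le_re hε.le harg
  have him : z.im * z.arg ≤ sin ε / 2 * ‖z‖ * log ‖z‖ := by
    refine (im_mul_arg_le harg').trans ?_
    have := mul_le_mul_of_nonneg_left hlog (by positivity : 0 ≤ sin ε / 2 * ‖z‖)
    rwa [show sin ε / 2 * ‖z‖ * (π / sin ε) = ‖z‖ * (π / 2) by field_simp] at this
  rw [norm_cexpNegMulLog, rpow_def_of_pos hz0]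
  gcongr
  nlinarith [(n.cast_nonneg : (0 : ℝ) ≤ n), Complex.abs_arg_le_pi_div_two_iff.1 harg',
    mul_le_mul_of_nonneg_right hre (hlog.trans' (div_pos pi_pos hsin).le)]

lemma memX_cexpNegMulLog (α : ℝ) (n : ℕ) : MemX α (cexpNegMulLog n) := by
  have hζ := zeta_le_pi_div_two α
  refine ⟨fun z hz harg => ?_, fun t ht => ?_, fun ε hε hεζ => ?_⟩
  · refine analyticAt_cexpNegMulLog n (Complex.mem_slitPlane_iff_arg.2 ⟨fun h => ?_, hz⟩)
    rw [h, abs_of_pos pi_pos] at harg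
    linarith [pi_pos]
  · rw [cexpNegMulLog_ofReal n ht.le, Complex.ofReal_im]
  · have hsin : 0 < sin ε := sin_pos_of_pos_of_lt_pi hε (by linarith [pi_pos])
    refine ⟨sin ε / 2, by positivity, exp (1 + π / 2), exp_pos _, 1, one_pos,
      exp (π / sin ε), exp_pos _, fun z _ harg hz => ?_, fun z _ harg hz => ?_⟩
    · exact norm_cexpNegMulLog_le_of_norm_le_one n (harg.trans (by linarith)) hz
    · exact (norm_cexpNegMulLog_le_rpow n hε (harg.trans (by linarith)) hz).trans
        (le_mul_of_one_le_left (by positivity) (one_le_exp (by positivity)))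

lemma memX_zero (α : ℝ) : MemX α fun _ => 0 :=
  ⟨fun _ _ _ => analyticAt_const, fun _ _ => rfl, fun _ _ _ =>
    ⟨1, one_pos, 1, one_pos, 1, one_pos, 1, one_pos, fun _ _ _ _ => by simp,
      fun _ _ _ _ => by simp only [norm_zero]; positivity⟩⟩

lemma MemX.add {α : ℝ} {u v : ℂ → ℂ} (hu : MemX α u) (hv : MemX α v) :
    MemX α fun z => u z + v z := by
  obtain ⟨hu_an, hu_re, hu_dec⟩ := hu
  obtain ⟨hv_an, hv_re, hv_dec⟩ := hv
  refine ⟨fun z hz harg => (hu_an z hz harg).add (hv_an z hz harg),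
    fun t ht => by simp [hu_re t ht, hv_re t ht], fun ε hε hεζ => ?_⟩
  obtain ⟨δ₁, hδ₁, C₁, hC₁, r₁, hr₁, R₁, -, hsmall₁, hlarge₁⟩ := hu_dec ε hε hεζ
  obtain ⟨δ₂, hδ₂, C₂, hC₂, r₂, hr₂, R₂, -, hsmall₂, hlarge₂⟩ := hv_dec ε hε hεζ
  refine ⟨min δ₁ δ₂, lt_min hδ₁ hδ₂, C₁ + C₂, add_pos hC₁ hC₂, min r₁ r₂, lt_min hr₁ hr₂,
    max 1 (max R₁ R₂), by positivity, fun z hz harg hzr => ?_, fun z hz harg hzR => ?_⟩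
  · exact (norm_add_le _ _).trans (add_le_add (hsmall₁ z hz harg (hzr.trans (min_le_left _ _)))
      (hsmall₂ z hz harg (hzr.trans (min_le_right _ _))))
  · obtain ⟨hz1, hzR₁, hzR₂⟩ : 1 ≤ ‖z‖ ∧ R₁ ≤ ‖z‖ ∧ R₂ ≤ ‖z‖ := by
      simpa only [max_le_iff] using hzR
    have hmono : ∀ δ, min δ₁ δ₂ ≤ δ → ‖z‖ ^ (-δ * ‖z‖) ≤ ‖z‖ ^ (-min δ₁ δ₂ * ‖z‖) :=
      fun δ hδ => rpow_le_rpow_of_exponent_le hz1 (by nlinarith)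
    calc ‖u z + v z‖ ≤ C₁ * ‖z‖ ^ (-δ₁ * ‖z‖) + C₂ * ‖z‖ ^ (-δ₂ * ‖z‖) :=
          (norm_add_le _ _).trans (add_le_add (hlarge₁ z hz harg hzR₁) (hlarge₂ z hz harg hzR₂))
      _ ≤ C₁ * ‖z‖ ^ (-min δ₁ δ₂ * ‖z‖) + C₂ * ‖z‖ ^ (-min δ₁ δ₂ * ‖z‖) :=
          add_le_add (mul_le_mul_of_nonneg_left (hmono _ (min_le_left _ _)) hC₁.le)
            (mul_le_mul_of_nonneg_left (hmono _ (min_le_right _ _)) hC₂.le)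
      _ = (C₁ + C₂) * ‖z‖ ^ (-min δ₁ δ₂ * ‖z‖) := by ring

lemma MemX.const_mul {α : ℝ} {u : ℂ → ℂ} (hu : MemX α u) (c : ℝ) :
    MemX α fun z => c * u z := by
  obtain ⟨hu_an, hu_re, hu_dec⟩ := hu
  refine ⟨fun z hz harg => analyticAt_const.mul (hu_an z hz harg),
    fun t ht => by simp [hu_re t ht], fun ε hε hεζ => ?_⟩
  obtain ⟨δ, hδ, C, hC, r, hr, R, hR, hsmall, hlarge⟩ := hu_dec ε hε hεζ
  have hnorm : ∀ z, ‖(c : ℂ) * u z‖ ≤ (|c| + 1) * ‖u z‖ := fun z => by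
    rw [norm_mul, Complex.norm_real, norm_eq_abs]
    exact mul_le_mul_of_nonneg_right (le_add_of_nonneg_right zero_le_one) (norm_nonneg _)
  refine ⟨δ, hδ, (|c| + 1) * C, by positivity, r, hr, R, hR, fun z hz harg hzr => ?_,
    fun z hz harg hzR => ?_⟩
  · exact (hnorm z).trans (by gcongr; exact hsmall z hz harg hzr)
  · rw [mul_assoc]
    exact (hnorm z).trans (by gcongr; exact hlarge z hz harg hzR)

def memXRestrictions (α : ℝ) : Submodule ℝ (Lp ℝ 2 (volume.restrict (Ioi (0 : ℝ)))) where
  carrier := {f | ∃ u : ℂ → ℂ, MemX α u ∧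
    ∀ᵐ x ∂(volume.restrict (Ioi (0 : ℝ))), (f : ℝ → ℝ) x = (u (x : ℂ)).re}
  zero_mem' := ⟨fun _ => 0, memX_zero α, by
    filter_upwards [Lp.coeFn_zero ℝ 2 (volume.restrict (Ioi (0 : ℝ)))] with x hx
    simpa using hx⟩
  add_mem' := by
    rintro f g ⟨u, hu, hfu⟩ ⟨v, hv, hgv⟩
    refine ⟨fun z => u z + v z, hu.add hv, ?_⟩
    filter_upwards [Lp.coeFn_add f g, hfu, hgv] with x hx hfx hgx
    rw [hx, Pi.add_apply, hfx, hgx, Complex.add_re]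
  smul_mem' := by
    rintro c f ⟨u, hu, hfu⟩
    refine ⟨fun z => c * u z, hu.const_mul c, ?_⟩
    filter_upwards [Lp.coeFn_smul c f, hfu] with x hx hfx
    rw [hx, Pi.smul_apply, hfx, smul_eq_mul, Complex.re_ofReal_mul]

lemma expNegMulLog_le_exp_one_sub (n : ℕ) {x : ℝ} (hx : 0 ≤ x) :
    expNegMulLog n x ≤ exp (1 - x) :=
  exp_le_exp.2 (by nlinarith [negMulLog_le_one_sub_self hx, (n.cast_nonneg : (0 : ℝ) ≤ n)])

lemma expNegMulLog_pos (n : ℕ) (x : ℝ) : 0 < expNegMulLog n x :=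
  exp_pos _

lemma continuous_expNegMulLog (n : ℕ) : Continuous (expNegMulLog n) := by
  unfold expNegMulLog
  fun_prop

lemma expNegMulLog_eq_mul_pow (n : ℕ) (x : ℝ) :
    expNegMulLog n x = exp (-x) ^ n * expNegMulLog 0 x := by
  rw [expNegMulLog, expNegMulLog, ← exp_nat_mul, ← exp_add]
  ring_nf

lemma memLp_expNegMulLog (n : ℕ) : MemLp (expNegMulLog n) 2 (volume.restrict (Ioi 0)) := by
  have hexp : MemLp (fun x => exp (1 - x)) 2 (volume.restrict (Ioi 0)) := by
    rw [memLp_two_iff_integrable_sq (by fun_prop)]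
    refine ((exp_neg_integrableOn_Ioi 0 two_pos).const_mul (exp 2)).congr (.of_forall fun x => ?_)
    simp only [sq, ← exp_add]
    ring_nf
  refine hexp.of_le (continuous_expNegMulLog n).aestronglyMeasurable ?_
  filter_upwards [ae_restrict_mem measurableSet_Ioi] with x hx
  rw [norm_of_nonneg (expNegMulLog_pos n x).le, norm_of_nonneg (exp_pos _).le]
  exact expNegMulLog_le_exp_one_sub n (le_of_lt hx)

noncomputable def expNegMulLogLp (n : ℕ) : Lp ℝ 2 (volume.restrict (Ioi (0 : ℝ))) :=
  (memLp_expNegMulLog n).toLp _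

lemma expNegMulLogLp_mem_memXRestrictions (α : ℝ) (n : ℕ) :
    expNegMulLogLp n ∈ memXRestrictions α := by
  refine ⟨cexpNegMulLog n, memX_cexpNegMulLog α n, ?_⟩
  filter_upwards [(memLp_expNegMulLog n).coeFn_toLp, ae_restrict_mem measurableSet_Ioi]
    with x hx hx0
  rw [expNegMulLogLp, hx, cexpNegMulLog_ofReal n (le_of_lt hx0), Complex.ofReal_re]

lemma inner_expNegMulLogLp (n : ℕ) (g : Lp ℝ 2 (volume.restrict (Ioi (0 : ℝ)))) :
    inner ℝ (expNegMulLogLp n) g = ∫ x in Ioi 0, exp (-x) ^ n * (expNegMulLog 0 x * g x) := by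
  rw [L2.inner_def]
  refine integral_congr_ae ?_
  filter_upwards [(memLp_expNegMulLog n).coeFn_toLp] with x hx
  rw [expNegMulLogLp, hx, RCLike.inner_apply, conj_trivial, expNegMulLog_eq_mul_pow]
  ring

lemma dense_span_range_expNegMulLogLp :
    Dense (Submodule.span ℝ (range expNegMulLogLp) :
      Set (Lp ℝ 2 (volume.restrict (Ioi (0 : ℝ))))) := by
  rw [Submodule.dense_iff_topologicalClosure_eq_top, Submodule.topologicalClosure_eq_top_iff,
    Submodule.eq_bot_iff]
  intro g hg
  have hmom : ∀ n : ℕ, ∫ x in Ioi 0, exp (-x) ^ n * (expNegMulLog 0 x * g x) = 0 := fun n => by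
    rw [← inner_expNegMulLogLp]
    exact (Submodule.mem_orthogonal _ g).1 hg _ (Submodule.subset_span ⟨n, rfl⟩)
  have hint : IntegrableOn (fun x => expNegMulLog 0 x * g x) (Ioi 0) := by
    refine (L2.integrable_inner (expNegMulLogLp 0) g).congr ?_
    filter_upwards [(memLp_expNegMulLog 0).coeFn_toLp] with x hx
    rw [expNegMulLogLp, hx, RCLike.inner_apply, conj_trivial, mul_comm]
  rw [Lp.eq_zero_iff_ae_eq_zero]
  filter_upwards [ae_eq_zero_of_integral_exp_neg_pow_mul_eq_zero hint hmom] with x hx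
  exact (mul_eq_zero.1 hx).resolve_left (expNegMulLog_pos 0 x).ne'

theorem stmt4_general (α : ℝ) :
    Dense {f : Lp ℝ 2 (volume.restrict (Set.Ioi (0 : ℝ))) |
      ∃ u : ℂ → ℂ, MemX α u ∧
        ∀ᵐ x ∂(volume.restrict (Set.Ioi (0 : ℝ))), (f : ℝ → ℝ) x = (u (x : ℂ)).re} :=
  dense_span_range_expNegMulLogLp.mono
    (Submodule.span_le.2 (range_subset_iff.2 (expNegMulLogLp_mem_memXRestrictions α)))

/-- Property (v) of the class `X_α`: the restrictions to `(0, ∞)` of functions in `X_α`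
are dense in `L²((0, ∞))`. -/
theorem stmt4 (α : ℝ) (hα1 : 0 < α) (hα2 : α ≤ 2) :
    Dense {f : Lp ℝ 2 (volume.restrict (Set.Ioi (0 : ℝ))) |
      ∃ u : ℂ → ℂ, MemX α u ∧
        ∀ᵐ x ∂(volume.restrict (Set.Ioi (0 : ℝ))), (f : ℝ → ℝ) x = (u (x : ℂ)).re} :=
  stmt4_general α
end

section
/- Let α ∈ (0,2] and ρ ∈ (0,1) with |α(1/2 − ρ)| < 1, and set ρ̂ := 1 − ρ. Let S be a complex-valued function on the strip {z ∈ ℂ : 0 < Re z < 1+α} satisfying: (H1) S(z) · S(1+α−z) = 1 for all z with 0 < Re z < 1+α; (H2) S(z) = 2 sin(πz) · S(z+α) for all z with 0 < Re z < 1. Then for every real z > 0, setting w := −iα·ln(z)/(2π), the following Wiener–Hopf factorization identity holds: [e^{iπαρ/4} z^{−αρ/2} S(1/2 + α/4 + αρ/2 + w) S(1/2 + 3α/4 + αρ/2 − w)] · [e^{−iπαρ̂/4} z^{−αρ̂/2} S(1/2 + 5α/4 − αρ/2 + w) S(1/2 + 3α/4 − αρ/2 − w)] = 1/(1 + z^α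 e^{iπα(1/2−ρ)}). -/
/-!
Put `v = α(1/2 - ρ)/2 + w`, so that `e^{iπv}` is a square root of
`Ψ(z) = z^α e^{iπα(1/2-ρ)}`. The first and last arguments of `S` add up to `1 + α`, so (H1)
cancels them. The other two are `1/2 + α ∓ v`, and (H1) and (H2) at `1/2 + v` give their product
as `1/(2 sin π(1/2 + v)) = 1/(2 cos πv)`. The exponential prefactors combine to `e^{-iπv}`, and
`e^{-iπv}/(2 cos πv) = 1/(1 + e^{2iπv}) = 1/(1 + Ψ(z))`.
-/

open Complex

lemma Complex.exp_neg_mul_I_div_two_cos (x : ℂ) :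
    exp (-(x * I)) / (2 * cos x) = 1 / (1 + exp (2 * (x * I))) := by
  have hfactor : 2 * cos x = exp (-(x * I)) * (1 + exp (2 * (x * I))) := by
    rw [two_cos, mul_add, mul_one, ← exp_add]
    ring_nf
  rw [hfactor, div_mul_cancel_left₀ (exp_ne_zero _), one_div]

lemma Complex.ofReal_rpow_eq_exp {x : ℝ} (hx : 0 < x) (r : ℝ) :
    ((x ^ r : ℝ) : ℂ) = exp (r * Real.log x) := by
  rw [Real.rpow_def_of_pos hx, ofReal_exp, ofReal_mul, mul_comm (Real.log x : ℂ)]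

lemma double_sine_mul_eq_inv_two_cos {α : ℝ} {S : ℂ → ℂ} (hα : 0 ≤ α)
    (H1 : ∀ z : ℂ, 0 < z.re → z.re < 1 + α → S z * S (1 + (α : ℂ) - z) = 1)
    (H2 : ∀ z : ℂ, 0 < z.re → z.re < 1 →
      S z = 2 * Complex.sin ((Real.pi : ℂ) * z) * S (z + (α : ℂ)))
    {v : ℂ} (hv : |v.re| < 1 / 2) :
    S (1 / 2 + α - v) * S (1 / 2 + α + v) = (2 * cos (Real.pi * v))⁻¹ := by
  obtain ⟨hv₁, hv₂⟩ := abs_lt.mp hv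
  have hre : (1 / 2 + v).re = 1 / 2 + v.re := by simp
  have hreflect := H1 (1 / 2 + v) (by rw [hre]; linarith) (by rw [hre]; linarith)
  have hshift := H2 (1 / 2 + v) (by rw [hre]; linarith) (by rw [hre]; linarith)
  have hsin : sin (Real.pi * (1 / 2 + v)) = cos (Real.pi * v) := by
    rw [mul_add, mul_one_div, sin_add, sin_pi_div_two, cos_pi_div_two]; ring
  rw [show 1 + (α : ℂ) - (1 / 2 + v) = 1 / 2 + α - v by ring] at hreflect
  rw [hsin, add_right_comm] at hshift
  apply eq_inv_of_mul_eq_one_left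
  linear_combination hreflect - S (1 / 2 + α - v) * hshift

section Exponents

variable {α ρ z : ℝ} {u : ℂ}

lemma exp_mul_rpow_mul_exp_mul_rpow_eq_exp_neg (hz : 0 < z)
    (hu : u = I * Real.pi * α * (1 / 2 - ρ) / 2 + α * Real.log z / 2) :
    exp (I * Real.pi * α * ρ / 4) * ((z ^ (-(α * ρ) / 2) : ℝ) : ℂ) *
      exp (-(I * Real.pi * α * (1 - ρ)) / 4) * ((z ^ (-(α * (1 - ρ)) / 2) : ℝ) : ℂ) =
      exp (-u) := by
  simp only [ofReal_rpow_eq_exp hz, ← exp_add]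
  rw [hu]
  push_cast
  ring_nf

lemma ofReal_rpow_mul_exp_eq_exp_two_mul (hz : 0 < z)
    (hu : u = I * Real.pi * α * (1 / 2 - ρ) / 2 + α * Real.log z / 2) :
    ((z ^ α : ℝ) : ℂ) * exp (I * Real.pi * α * (1 / 2 - ρ)) = exp (2 * u) := by
  rw [ofReal_rpow_eq_exp hz, ← exp_add, hu]
  ring_nf

end Exponents

theorem stmt10_general (α ρ : ℝ) (hα1 : 0 < α)
    (hadm : |α * (1 / 2 - ρ)| < 1)
    (S : ℂ → ℂ)
    (H1 : ∀ z : ℂ, 0 < z.re → z.re < 1 + α → S z * S (1 + (α : ℂ) - z) = 1)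
    (H2 : ∀ z : ℂ, 0 < z.re → z.re < 1 →
      S z = 2 * Complex.sin ((Real.pi : ℂ) * z) * S (z + (α : ℂ))) :
    ∀ z : ℝ, 0 < z →
      ∀ w : ℂ, w = -Complex.I * (α : ℂ) * (Real.log z : ℂ) / (2 * (Real.pi : ℂ)) →
      (Complex.exp (Complex.I * (Real.pi : ℂ) * (α : ℂ) * (ρ : ℂ) / 4) *
          ((z ^ (-(α * ρ) / 2) : ℝ) : ℂ) *
          S ((1 : ℂ) / 2 + (α : ℂ) / 4 + (α : ℂ) * (ρ : ℂ) / 2 + w) *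
          S ((1 : ℂ) / 2 + 3 * (α : ℂ) / 4 + (α : ℂ) * (ρ : ℂ) / 2 - w)) *
      (Complex.exp (-(Complex.I * (Real.pi : ℂ) * (α : ℂ) * ((1 : ℂ) - (ρ : ℂ))) / 4) *
          ((z ^ (-(α * (1 - ρ)) / 2) : ℝ) : ℂ) *
          S ((1 : ℂ) / 2 + 5 * (α : ℂ) / 4 - (α : ℂ) * (ρ : ℂ) / 2 + w) *
          S ((1 : ℂ) / 2 + 3 * (α : ℂ) / 4 - (α : ℂ) * (ρ : ℂ) / 2 - w)) =
      1 / (1 + ((z ^ α : ℝ) : ℂ) *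
        Complex.exp (Complex.I * (Real.pi : ℂ) * (α : ℂ) * ((1 : ℂ) / 2 - (ρ : ℂ)))) := by
  intro z hz w hw
  set v : ℂ := (α * (1 / 2 - ρ) / 2 : ℝ) + w with hv_def
  have hw_re : w.re = 0 := by
    rw [show w = ((-(α * Real.log z / (2 * Real.pi)) : ℝ) : ℂ) * I by
      rw [hw]; push_cast; ring, re_ofReal_mul, I_re, mul_zero]
  have hv : |v.re| < 1 / 2 := by
    rw [add_re, ofReal_re, hw_re, add_zero, abs_div, abs_two]
    linarith
  have hπv : Real.pi * v * I = I * Real.pi * α * (1 / 2 - ρ) / 2 + α * Real.log z / 2 := by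
    rw [hv_def, hw]
    field_simp
    push_cast
    linear_combination (-2 * (α : ℂ) * Real.log z) * I_sq
  have hreflect :
      S (1 / 2 + 3 * α / 4 - α * ρ / 2 - w) * S (1 / 2 + α / 4 + α * ρ / 2 + w) = 1 := by
    have hre : (1 / 2 + 3 * α / 4 - α * ρ / 2 - w : ℂ).re =
        1 / 2 + α / 2 + α * (1 / 2 - ρ) / 2 := by
      simp [hw_re]; ring
    obtain ⟨h₁, h₂⟩ := abs_lt.mp hadm
    convert H1 _ (by rw [hre]; linarith) (by rw [hre]; linarith) using 3
    ring
  have hcos : S (1 / 2 + 3 * α / 4 + α * ρ / 2 - w) * S (1 / 2 + 5 * α / 4 - α * ρ / 2 + w) =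
      (2 * cos (Real.pi * v))⁻¹ := by
    convert double_sine_mul_eq_inv_two_cos hα1.le H1 H2 hv using 3 <;>
      (rw [hv_def]; push_cast; ring)
  rw [ofReal_rpow_mul_exp_eq_exp_two_mul hz hπv, ← exp_neg_mul_I_div_two_cos,
    ← exp_mul_rpow_mul_exp_mul_rpow_eq_exp_neg hz hπv, div_eq_mul_inv _ (2 * cos _),
    ← hcos]
  linear_combination (exp (I * Real.pi * α * ρ / 4) * ((z ^ (-(α * ρ) / 2) : ℝ) : ℂ) *
      exp (-(I * Real.pi * α * (1 - ρ)) / 4) * ((z ^ (-(α * (1 - ρ)) / 2) : ℝ) : ℂ) *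
      S (1 / 2 + 3 * α / 4 + α * ρ / 2 - w) * S (1 / 2 + 5 * α / 4 - α * ρ / 2 + w)) *
    hreflect

/-- Verification of the Wiener–Hopf factorization (proof of Theorem 3.1): if `S` satisfies
the reflection identity (H1) and the second functional equation (H2) of the double sine
function on the strip `0 < Re z < 1 + α`, then for every `z > 0`, with
`w = -iα ln(z)/(2π)`, the product of the two candidate Wiener–Hopf factors equals
`1/(1 + z^α e^{iπα(1/2 - ρ)})`. -/
theorem stmt10 (α ρ : ℝ) (hα1 : 0 < α) (hα2 : α ≤ 2) (hρ1 : 0 < ρ) (hρ2 : ρ < 1)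
    (hadm : |α * (1 / 2 - ρ)| < 1)
    (S : ℂ → ℂ)
    (H1 : ∀ z : ℂ, 0 < z.re → z.re < 1 + α → S z * S (1 + (α : ℂ) - z) = 1)
    (H2 : ∀ z : ℂ, 0 < z.re → z.re < 1 →
      S z = 2 * Complex.sin ((Real.pi : ℂ) * z) * S (z + (α : ℂ))) :
    ∀ z : ℝ, 0 < z →
      ∀ w : ℂ, w = -Complex.I * (α : ℂ) * (Real.log z : ℂ) / (2 * (Real.pi : ℂ)) →
      (Complex.exp (Complex.I * (Real.pi : ℂ) * (α : ℂ) * (ρ : ℂ) / 4) *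
          ((z ^ (-(α * ρ) / 2) : ℝ) : ℂ) *
          S ((1 : ℂ) / 2 + (α : ℂ) / 4 + (α : ℂ) * (ρ : ℂ) / 2 + w) *
          S ((1 : ℂ) / 2 + 3 * (α : ℂ) / 4 + (α : ℂ) * (ρ : ℂ) / 2 - w)) *
      (Complex.exp (-(Complex.I * (Real.pi : ℂ) * (α : ℂ) * ((1 : ℂ) - (ρ : ℂ))) / 4) *
          ((z ^ (-(α * (1 - ρ)) / 2) : ℝ) : ℂ) *
          S ((1 : ℂ) / 2 + 5 * (α : ℂ) / 4 - (α : ℂ) * (ρ : ℂ) / 2 + w) *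
          S ((1 : ℂ) / 2 + 3 * (α : ℂ) / 4 - (α : ℂ) * (ρ : ℂ) / 2 - w)) =
      1 / (1 + ((z ^ α : ℝ) : ℂ) *
        Complex.exp (Complex.I * (Real.pi : ℂ) * (α : ℂ) * ((1 : ℂ) / 2 - (ρ : ℂ)))) :=
  stmt10_general α ρ hα1 hadm S H1 H2
end

section
/- Let α ∈ (0,2], ρ ∈ (0,1), and set ρ̂ := 1 − ρ. Define K(x) := e^{−x cos(πρ)} · sin(x sin(πρ) + πρ̂(1 − αρ)/2) for x ∈ ℝ. Then for every real x: −i · sin(πρ) · exp(−x e^{iπρ} + iπαρρ̂/2 + 3πiρ/2) = K(x) + e^{iπρ} K′(x), where K′ denotes the derivative of K with respect to x. -/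
/-!
Write `θ = x sin t + C`. Then `K = e^{-x cos t} sin θ` and `K' = e^{-x cos t} sin (t - θ)`, so the
claim reduces to the trigonometric identity `sin θ + e^{it} sin (t - θ) = sin t · e^{i(t - θ)}`.
With `t = πρ` and `C = πρ̂(1 - αρ)/2` one has `t - C = παρρ̂/2 + 3πρ/2 - π/2`, and the factor
`e^{-iπ/2} = -i` accounts for the shift by `π/2`.
-/

open Complex in
theorem Complex.sin_sub_add_exp_mul_I_mul_sin (t u : ℂ) :
    sin (t - u) + exp (t * I) * sin u = sin t * exp (u * I) := by
  rw [sin_sub, exp_mul_I, exp_mul_I]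
  ring

theorem hasDerivAt_exp_mul_sin (t C x : ℝ) :
    HasDerivAt (fun y => Real.exp (-y * Real.cos t) * Real.sin (y * Real.sin t + C))
      (Real.exp (-x * Real.cos t) * Real.sin (t - (x * Real.sin t + C))) x := by
  have hexp := ((hasDerivAt_neg x).mul_const (Real.cos t)).exp
  have hsin := (((hasDerivAt_id' x).mul_const (Real.sin t)).add_const C).sin
  refine (hexp.mul hsin).congr_deriv ?_
  rw [Real.sin_sub]
  ring

open Complex in
theorem exp_mul_sin_add_exp_mul_I_mul_deriv {K : ℝ → ℝ} {t C : ℝ}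
    (hK : ∀ y, K y = Real.exp (-y * Real.cos t) * Real.sin (y * Real.sin t + C)) (x : ℝ) :
    ((K x : ℝ) : ℂ) + exp (t * I) * ((deriv K x : ℝ) : ℂ) =
      Real.sin t * exp (-x * exp (t * I) + (t - C) * I) := by
  obtain rfl : K = _ := funext hK
  set θ := x * Real.sin t + C
  have hexponent : -x * exp (t * I) + (t - C) * I = ((-x * Real.cos t : ℝ) : ℂ) + (t - θ : ℝ) * I := by
    rw [exp_mul_I, ← ofReal_cos, ← ofReal_sin]
    push_cast [θ]
    ring
  rw [(hasDerivAt_exp_mul_sin t C x).deriv, hexponent, exp_add, ← ofReal_exp]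
  have htrig := Complex.sin_sub_add_exp_mul_I_mul_sin t (t - θ)
  rw [sub_sub_cancel] at htrig
  push_cast [θ] at htrig ⊢
  linear_combination exp (-x * cos t) * htrig

theorem stmt11_general (α ρ : ℝ)
    (K : ℝ → ℝ)
    (hK : ∀ x : ℝ, K x = Real.exp (-x * Real.cos (Real.pi * ρ)) *
      Real.sin (x * Real.sin (Real.pi * ρ) + Real.pi * (1 - ρ) * (1 - α * ρ) / 2)) :
    ∀ x : ℝ,
      -Complex.I * (Real.sin (Real.pi * ρ) : ℂ) *
        Complex.exp (-(x : ℂ) * Complex.exp (Complex.I * (Real.pi : ℂ) * (ρ : ℂ))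
          + Complex.I * (Real.pi : ℂ) * (α : ℂ) * (ρ : ℂ) * ((1 : ℂ) - (ρ : ℂ)) / 2
          + 3 * (Real.pi : ℂ) * Complex.I * (ρ : ℂ) / 2) =
      ((K x : ℝ) : ℂ) +
        Complex.exp (Complex.I * (Real.pi : ℂ) * (ρ : ℂ)) * ((deriv K x : ℝ) : ℂ) := by
  intro x
  have hphase : Complex.I * Real.pi * ρ = ((Real.pi * ρ : ℝ) : ℂ) * Complex.I := by push_cast; ring
  rw [hphase, exp_mul_sin_add_exp_mul_I_mul_deriv hK x]
  have hshift : -(x : ℂ) * Complex.exp ((Real.pi * ρ : ℝ) * Complex.I)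
        + Complex.I * Real.pi * α * ρ * (1 - ρ) / 2 + 3 * Real.pi * Complex.I * ρ / 2
      = -x * Complex.exp ((Real.pi * ρ : ℝ) * Complex.I)
        + ((Real.pi * ρ : ℝ) - (Real.pi * (1 - ρ) * (1 - α * ρ) / 2 : ℝ)) * Complex.I
        + Real.pi / 2 * Complex.I := by
    push_cast
    ring
  rw [hshift, Complex.exp_add, Complex.exp_pi_div_two_mul_I]
  linear_combination (-(Real.sin (Real.pi * ρ) : ℂ) * Complex.exp _) * Complex.I_sq

/-- The elementary identity from the proof of Lemma 3.9(iii): for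
`K(x) = e^{-x cos(πρ)} sin(x sin(πρ) + πρ̂(1 - αρ)/2)` (with `ρ̂ = 1 - ρ`) one has
`-i sin(πρ) exp(-x e^{iπρ} + iπαρρ̂/2 + 3πiρ/2) = K(x) + e^{iπρ} K'(x)`. -/
theorem stmt11 (α ρ : ℝ) (hα1 : 0 < α) (hα2 : α ≤ 2) (hρ1 : 0 < ρ) (hρ2 : ρ < 1)
    (K : ℝ → ℝ)
    (hK : ∀ x : ℝ, K x = Real.exp (-x * Real.cos (Real.pi * ρ)) *
      Real.sin (x * Real.sin (Real.pi * ρ) + Real.pi * (1 - ρ) * (1 - α * ρ) / 2)) :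
    ∀ x : ℝ,
      -Complex.I * (Real.sin (Real.pi * ρ) : ℂ) *
        Complex.exp (-(x : ℂ) * Complex.exp (Complex.I * (Real.pi : ℂ) * (ρ : ℂ))
          + Complex.I * (Real.pi : ℂ) * (α : ℂ) * (ρ : ℂ) * ((1 : ℂ) - (ρ : ℂ)) / 2
          + 3 * (Real.pi : ℂ) * Complex.I * (ρ : ℂ) / 2) =
      ((K x : ℝ) : ℂ) +
        Complex.exp (Complex.I * (Real.pi : ℂ) * (ρ : ℂ)) * ((deriv K x : ℝ) : ℂ) :=
  stmt11_general α ρ K hK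
end

section
/- Let α > 0 and ρ > 0 with αρ < 1. Then there exists a constant A = A(α, ρ) > 0 such that for all y > 0: ∫₀^∞ e^{−ty} · min(t^α, t^{−αρ}) dt ≤ A · min(y^{αρ−1}, y^{−α−1}). -/
/-!
Bounding `min (t ^ α) (t ^ (-(α * ρ)))` by either of its two terms turns the integral into a
Laplace transform of a power, `∫₀^∞ e^{-ty} t^s dt = Γ(s + 1) y^{-s-1}`, which is finite
because `α > -1` and `-(α * ρ) > -1`. Taking both bounds gives the minimum of the two powers
of `y`, with `A = max (Γ(α + 1)) (Γ(1 - α ρ))`.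
-/

open MeasureTheory Set Real

section LaplaceRpow

variable {s y : ℝ}

lemma integrableOn_exp_neg_mul_mul_rpow (hs : -1 < s) (hy : 0 < y) :
    IntegrableOn (fun t : ℝ => exp (-t * y) * t ^ s) (Ioi 0) := by
  have := integrableOn_rpow_mul_exp_neg_mul_rpow hs zero_lt_one hy
  refine this.congr_fun (fun t _ => ?_) measurableSet_Ioi
  simp only [rpow_one]
  ring_nf

lemma integral_exp_neg_mul_mul_rpow (hs : -1 < s) (hy : 0 < y) :
    ∫ t in Ioi (0 : ℝ), exp (-t * y) * t ^ s = Gamma (s + 1) * y ^ (-s - 1) := by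
  have := integral_rpow_mul_exp_neg_mul_Ioi (a := s + 1) (by linarith) hy
  rw [add_sub_cancel_right] at this
  calc ∫ t in Ioi (0 : ℝ), exp (-t * y) * t ^ s
      = ∫ t in Ioi (0 : ℝ), t ^ s * exp (-(y * t)) := by congr 1; ext t; ring_nf
    _ = Gamma (s + 1) * y ^ (-s - 1) := by
      rw [this, one_div, inv_rpow hy.le, ← rpow_neg hy.le, mul_comm, neg_add']

lemma setIntegral_exp_neg_mul_mul_le_of_le_rpow {g : ℝ → ℝ} (hs : -1 < s) (hy : 0 < y)
    (hg : Measurable g) (hg0 : ∀ t ∈ Ioi (0 : ℝ), 0 ≤ g t)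
    (hgs : ∀ t ∈ Ioi (0 : ℝ), g t ≤ t ^ s) :
    ∫ t in Ioi (0 : ℝ), exp (-t * y) * g t ≤ Gamma (s + 1) * y ^ (-s - 1) := by
  have hbound : ∀ t ∈ Ioi (0 : ℝ), exp (-t * y) * g t ≤ exp (-t * y) * t ^ s :=
    fun t ht => mul_le_mul_of_nonneg_left (hgs t ht) (exp_pos _).le
  have hint := integrableOn_exp_neg_mul_mul_rpow hs hy
  have hgint : IntegrableOn (fun t => exp (-t * y) * g t) (Ioi 0) := by
    refine hint.mono' (by fun_prop) ?_
    filter_upwards [ae_restrict_mem measurableSet_Ioi] with t ht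
    rw [norm_of_nonneg (mul_nonneg (exp_pos _).le (hg0 t ht))]
    exact hbound t ht
  rw [← integral_exp_neg_mul_mul_rpow hs hy]
  exact setIntegral_mono_on hgint hint measurableSet_Ioi hbound

end LaplaceRpow

theorem stmt12_general (α ρ : ℝ) (hα : 0 < α) (h : α * ρ < 1) :
    ∃ A > 0, ∀ y : ℝ, 0 < y →
      (∫ t in Set.Ioi (0 : ℝ), Real.exp (-t * y) * min (t ^ α) (t ^ (-(α * ρ)))) ≤
        A * min (y ^ (α * ρ - 1)) (y ^ (-α - 1)) := by
  have hΓ : 0 < Gamma (α + 1) := Gamma_pos_of_pos (by linarith)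
  refine ⟨max (Gamma (α + 1)) (Gamma (1 - α * ρ)), lt_max_of_lt_left hΓ, fun y hy => ?_⟩
  have hmeas : Measurable fun t : ℝ => min (t ^ α) (t ^ (-(α * ρ))) := by fun_prop
  have hnonneg : ∀ t ∈ Ioi (0 : ℝ), 0 ≤ min (t ^ α) (t ^ (-(α * ρ))) :=
    fun t ht => le_min (rpow_nonneg (le_of_lt ht) _) (rpow_nonneg (le_of_lt ht) _)
  have hle₁ := setIntegral_exp_neg_mul_mul_le_of_le_rpow (by linarith) hy hmeas hnonneg
    fun t _ => min_le_left _ _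
  have hle₂ := setIntegral_exp_neg_mul_mul_le_of_le_rpow (s := -(α * ρ)) (by linarith) hy
    hmeas hnonneg fun t _ => min_le_right _ _
  rw [neg_neg, neg_add_eq_sub] at hle₂
  rw [mul_min_of_nonneg _ _ (hΓ.le.trans (le_max_left _ _))]
  refine le_min (hle₂.trans ?_) (hle₁.trans ?_) <;> gcongr
  exacts [le_max_right _ _, le_max_left _ _]

/-- The estimate (3.28) from the proof of Lemma 3.5(ii): for `α > 0`, `ρ > 0` with
`αρ < 1`, there is a constant `A = A(α, ρ) > 0` such that for all `y > 0`,
`∫₀^∞ e^{-ty} min(t^α, t^{-αρ}) dt ≤ A min(y^{αρ-1}, y^{-α-1})`. -/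
theorem stmt12 (α ρ : ℝ) (hα : 0 < α) (hρ : 0 < ρ) (h : α * ρ < 1) :
    ∃ A > 0, ∀ y : ℝ, 0 < y →
      (∫ t in Set.Ioi (0 : ℝ), Real.exp (-t * y) * min (t ^ α) (t ^ (-(α * ρ)))) ≤
        A * min (y ^ (α * ρ - 1)) (y ^ (-α - 1)) :=
  stmt12_general α ρ hα h
end
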